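/- Let k ≥ 2 and 1 ≤ b ≤ k−1. For every n ∈ ℕ, the number of occurrences of the two-letter word (0.b) in W_n^{(k)} satisfies c^{(k)}((0.b); n) = Σ_{i=max(n−k+1,0)}^{n−1} c^{(k)}((0.b); i) + [n = b], where [n = b] is 1 if n = b and 0 otherwise. -/

import Mathlib

/-- Image of a single letter `m = k*i + j` under the k-Bonacci morphism `φ_k` over ℕ:
`φ_k(ki+j) = (ki)(ki+j+1)` for `0 ≤ j ≤ k-2`, and `φ_k(ki+(k-1)) = ki+k`. -/
def phiLetter (k m : ℕ) : List ℕ :=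
  if m % k = k - 1 then [m + 1] else [k * (m / k), m + 1]

/-- The morphism `φ_k`, extended to words by concatenation. -/
def phi (k : ℕ) (w : List ℕ) : List ℕ := (w.map (phiLetter k)).flatten

/-- `W k n = φ_k^n(0)`, the n-th iterate of `φ_k` applied to the one-letter word `0`. -/
def W (k n : ℕ) : List ℕ := (phi k)^[n] [0]

/-- `shift n w = n ⊕ w`, adding `n` to every letter. -/
def shift (n : ℕ) (w : List ℕ) : List ℕ := w.map (· + n)

/-- `occ B w = |w|_B`, the number of (possibly overlapping) occurrences of `B`
as a factor of `w`, i.e. the number of positions `i` at which `B` is a prefix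
of the suffix of `w` starting at `i`. -/
def occ (B w : List ℕ) : ℕ :=
  ((List.range (w.length + 1)).filter (fun i => decide (B <+: w.drop i))).length

/-- `C k B = C_B^{(k)}(y) = Σ_{n≥0} |W_n^{(k)}|_B yⁿ` as a formal power series over ℚ. -/
noncomputable def C (k : ℕ) (B : List ℕ) : PowerSeries ℚ :=
  PowerSeries.mk (fun n => (occ B (W k n) : ℚ))

/-- `Hgf r = H_r(y)`, the multiplicative inverse of `1 - y - y² - ⋯ - y^r`. -/
noncomputable def Hgf (r : ℕ) : PowerSeries ℚ :=
  (1 - ∑ j ∈ Finset.Icc 1 r, (PowerSeries.X : PowerSeries ℚ) ^ j)⁻¹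

/-- `Ggf r = G_r(y) = (1 - y^r)·H_r(y) - 1`. -/
noncomputable def Ggf (r : ℕ) : PowerSeries ℚ :=
  (1 - (PowerSeries.X : PowerSeries ℚ) ^ r) * Hgf r - 1

/-- The set `B^{(k)} = B_1^{(k)} ∪ B_2^{(k)} ∪ B_3^{(k)}` of length-2 words. -/
def Bset (k : ℕ) : Set (List ℕ) :=
  {U | (∃ i a : ℕ, 1 ≤ a ∧ U = [a + k * i, k + k * i]) ∨
       (∃ i b : ℕ, 1 ≤ b ∧ b ≤ k - 1 ∧ U = [k * i, b + k * i]) ∨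
       (∃ a : ℕ, 1 ≤ a ∧ U = [a, 0])}

/-- The list of blocks in the decomposition of `W_n^{(k)}` for `n ≥ k`:
`W_{n-1}, …, W_{n-k+1}, k ⊕ W_{n-k}`. -/
def blocks (k n : ℕ) : List (List ℕ) :=
  (List.range (k - 1)).map (fun j => W k (n - 1 - j)) ++ [shift k (W k (n - k))]

def aux (x y : ℕ) : List ℕ → ℕ
  | [] => 0
  | [_] => 0
  | a :: c :: l => (if a = x ∧ c = y then 1 else 0) + aux x y (c :: l)

lemma occ_cons (x y a : ℕ) (l : List ℕ) :
    occ [x,y] (a :: l) = (if [x,y] <+: a :: l then 1 else 0) + occ [x,y] l := by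
  unfold occ
  rw [show (a::l).length + 1 = l.length + 1 + 1 by simp, List.range_succ_eq_map,
    List.filter_cons, List.filter_map]
  simp only [Function.comp_def, List.drop_succ_cons, List.length_map, List.drop_zero]
  by_cases h : [x,y] <+: (a :: l) <;> simp [h, Nat.add_comm]

lemma occ_eq_aux (x y : ℕ) (w : List ℕ) : occ [x,y] w = aux x y w := by
  induction w with
  | nil => simp [occ, aux]
  | cons a l ih =>
    rw [occ_cons, ih]
    cases l with
    | nil => simp [aux]
    | cons c l' =>
      have h : ([x, y] <+: a :: c :: l') ↔ (a = x ∧ c = y) := by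
        simp [List.cons_prefix_cons, eq_comm]
      simp only [aux, h]

lemma aux_cons (x y a : ℕ) (l : List ℕ) :
    aux x y (a :: l) = (if a = x ∧ l.head? = some y then 1 else 0) + aux x y l := by
  cases l <;> simp [aux]

lemma phi_cons (k m : ℕ) (w : List ℕ) : phi k (m :: w) = phiLetter k m ++ phi k w := by
  simp [phi]

lemma W_succ (k n : ℕ) : W k (n+1) = phi k (W k n) := by
  simp [W, Function.iterate_succ_apply']

lemma W_zero (k : ℕ) : W k 0 = [0] := rfl

lemma mul_div_zero_iff (k m : ℕ) (hk : 2 ≤ k) : k * (m / k) = 0 ↔ m < k := by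
  rw [Nat.mul_eq_zero]
  constructor
  · rintro (h | h)
    · omega
    · exact (Nat.div_eq_zero_iff.mp h).resolve_left (by omega)
  · intro h
    exact Or.inr (Nat.div_eq_zero_iff.mpr (Or.inr h))

lemma aux_phi (k b : ℕ) (hk : 2 ≤ k) (hb1 : 1 ≤ b) (hb2 : b ≤ k - 1) (w : List ℕ) :
    aux 0 b (phi k w) = w.count (b - 1) := by
  induction w with
  | nil => simp [phi, aux]
  | cons m w ih =>
    rw [phi_cons, phiLetter]
    by_cases h : m % k = k - 1
    · rw [if_pos h, List.singleton_append, aux_cons, ih, List.count_cons]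
      have hm : ¬ (m == b - 1) = true := by
        simp only [beq_iff_eq]
        intro he
        rw [he, Nat.mod_eq_of_lt (by omega)] at h
        omega
      simp [hm]
    · rw [if_neg h, List.cons_append, List.singleton_append, aux_cons, aux_cons, ih,
        List.count_cons]
      have h0 := mul_div_zero_iff k m hk
      simp only [List.head?_cons, Option.some.injEq, beq_iff_eq]
      rw [if_neg (show ¬(m + 1 = 0 ∧ (phi k w).head? = some b) by rintro ⟨h', -⟩; omega)]
      have hiff : (k * (m / k) = 0 ∧ m + 1 = b) ↔ m = b - 1 := by rw [h0]; omega
      simp only [hiff]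
      split_ifs <;> omega

lemma count_phiLetter (k c m : ℕ) (hc1 : 1 ≤ c) (hc2 : c < k) :
    (phiLetter k m).count c = if m + 1 = c then 1 else 0 := by
  unfold phiLetter
  split
  · simp [List.count_cons]
  · have h0 : ¬ (k * (m / k) = c) := by
      rcases Nat.eq_zero_or_pos (m / k) with h | h
      · simp [h]; omega
      · have : k ≤ k * (m / k) := Nat.le_mul_of_pos_right k h
        omega
    simp [List.count_cons, beq_iff_eq, h0]

lemma count_phi (k c : ℕ) (hc1 : 1 ≤ c) (hc2 : c < k) (w : List ℕ) :
    (phi k w).count c = w.count (c - 1) := by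
  induction w with
  | nil => simp [phi]
  | cons m w ih =>
    rw [phi_cons, List.count_append, count_phiLetter k c m hc1 hc2, ih, List.count_cons]
    simp only [beq_iff_eq]
    split_ifs <;> omega

lemma count_zero_phiLetter (k m : ℕ) (hk : 2 ≤ k) :
    (phiLetter k m).count 0 = if m < k - 1 then 1 else 0 := by
  unfold phiLetter
  split
  · rename_i h
    have hm : ¬ m < k - 1 := by
      intro hlt
      rw [Nat.mod_eq_of_lt (by omega)] at h
      omega
    simp [hm]
  · rename_i h
    have h0 := mul_div_zero_iff k m hk
    have h1 : m < k ↔ m < k - 1 := by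
      constructor
      · intro hm
        rw [Nat.mod_eq_of_lt hm] at h
        omega
      · omega
    simp only [List.count_cons, List.count_nil, beq_iff_eq]
    rw [if_neg (by omega : ¬ (m + 1 = 0)), if_congr (h0.trans h1) rfl rfl]
    simp

lemma count_zero_phi (k : ℕ) (hk : 2 ≤ k) (w : List ℕ) :
    (phi k w).count 0 = ∑ c ∈ Finset.range (k-1), w.count c := by
  induction w with
  | nil => simp [phi]
  | cons m w ih =>
    rw [phi_cons, List.count_append, count_zero_phiLetter k m hk, ih]
    have : ∀ c, (m :: w).count c = w.count c + if m = c then 1 else 0 := by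
      intro c; rw [List.count_cons]; simp [beq_iff_eq]
    simp only [this]
    rw [Finset.sum_add_distrib, Finset.sum_ite_eq]
    by_cases hm : m < k - 1 <;> simp [hm, Finset.mem_range, Nat.add_comm]

lemma letters_le (k n : ℕ) : ∀ x ∈ W k n, x ≤ n := by
  induction n with
  | zero => simp [W]
  | succ n ih =>
    intro x hx
    rw [W_succ] at hx
    simp only [phi, List.mem_flatten, List.mem_map] at hx
    obtain ⟨l, ⟨m, hm, rfl⟩, hxl⟩ := hx
    have hmn := ih m hm
    have hdiv : k * (m / k) ≤ m := Nat.mul_div_le m k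
    unfold phiLetter at hxl
    split at hxl <;> simp at hxl <;> omega

lemma count_W_big (k c n : ℕ) (h : n < c) : (W k n).count c = 0 := by
  rw [List.count_eq_zero]
  intro hm
  have := letters_le k n c hm
  omega

lemma count_W (k : ℕ) (hk : 2 ≤ k) :
    ∀ c, c < k - 1 → ∀ m, c ≤ m → (W k m).count c = (W k (m - c)).count 0 := by
  intro c
  induction c with
  | zero => simp
  | succ c ih =>
    intro hc m hm
    obtain ⟨m', rfl⟩ : ∃ m', m = m' + 1 := ⟨m - 1, by omega⟩
    have e : m' + 1 - (c+1) = m' - c := by omega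
    rw [e, W_succ, count_phi k (c+1) (by omega) (by omega), Nat.add_sub_cancel]
    exact ih (by omega) m' (by omega)

lemma h_rec (k : ℕ) (hk : 2 ≤ k) (m : ℕ) :
    (W k (m+1)).count 0 =
      ∑ c ∈ Finset.range (k-1), (if c ≤ m then (W k (m-c)).count 0 else 0) := by
  rw [W_succ, count_zero_phi k hk]
  refine Finset.sum_congr rfl (fun c hc => ?_)
  rw [Finset.mem_range] at hc
  by_cases h : c ≤ m
  · rw [if_pos h, count_W k hk c hc m h]
  · rw [if_neg h, count_W_big k c m (by omega)]

lemma occ_W (k b : ℕ) (hk : 2 ≤ k) (hb1 : 1 ≤ b) (hb2 : b ≤ k - 1) (n : ℕ) :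
    occ [0, b] (W k n) = if b ≤ n then (W k (n - b)).count 0 else 0 := by
  cases n with
  | zero =>
    rw [if_neg (by omega), occ_eq_aux, W_zero]
    simp [aux]
  | succ n =>
    rw [occ_eq_aux, W_succ, aux_phi k b hk hb1 hb2]
    by_cases h : b ≤ n + 1
    · rw [if_pos h, show n + 1 - b = n - (b-1) by omega]
      exact count_W k hk (b-1) (by omega) n (by omega)
    · rw [if_neg h]
      exact count_W_big k (b-1) n (by omega)

theorem stmt11 (k b n : ℕ) (hk : 2 ≤ k) (hb1 : 1 ≤ b) (hb2 : b ≤ k - 1) :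
    occ [0, b] (W k n) =
      (∑ i ∈ Finset.Ico (n + 1 - k) n, occ [0, b] (W k i))
      + (if n = b then 1 else 0) := by
  simp only [occ_W k b hk hb1 hb2]
  rcases lt_trichotomy n b with hnb | rfl | hnb
  · rw [if_neg (by omega), if_neg (by omega), Finset.sum_eq_zero, Nat.add_zero]
    intro i hi
    rw [Finset.mem_Ico] at hi
    rw [if_neg (by omega)]
  · rw [if_pos le_rfl, Nat.sub_self, show (W k 0).count 0 = 1 by rw [W_zero]; simp,
      if_pos rfl, Finset.sum_eq_zero, Nat.zero_add]
    intro i hi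
    rw [Finset.mem_Ico] at hi
    rw [if_neg (by omega)]
  · rw [if_pos (by omega), if_neg (by omega), Nat.add_zero,
      show n - b = (n - b - 1) + 1 by omega, h_rec k hk,
      Finset.sum_Ico_eq_sum_range]
    conv_rhs => rw [← Finset.sum_range_reflect]
    set s := n + 1 - k with hs
    set N := n - s with hN
    have hNk : N ≤ k - 1 := by omega
    refine ((Finset.sum_subset (Finset.range_subset_range.mpr hNk)
      (fun c hc hcn => ?_)).symm).trans (Finset.sum_congr rfl (fun c hc => ?_))
    · simp only [Finset.mem_range] at hc hcn
      rw [if_neg (by omega)]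
    · rw [Finset.mem_range] at hc
      have e1 : s + (N - 1 - c) = n - 1 - c := by omega
      have e2 : n - 1 - c - b = n - b - 1 - c := by omega
      rw [e1, e2]
      split_ifs with h1 h2 h3
      · rfl
      · exact absurd h1 (by omega)
      · exact absurd h3 (by omega)
      · rfl
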